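/- arXiv:2601.19999 — 2 statements merged into one kernel-verified Lean document; each statement's English description precedes it below -/
import Mathlib

section
/- If there exists a bowtie of involutions, then there exists a nontrivial automorphism Φ of the Boolean algebra P(ω)/Fin satisfying Φ ∘ Φ = identity. -/
open Set

/-- The first uncountable ordinal `ω₁`. -/
noncomputable def omega1 : Ordinal := (Cardinal.aleph 1).ord

/-- `A =* B` : the symmetric difference `(A \ B) ∪ (B \ A)` is finite. -/
def EqStar (A B : Set ℕ) : Prop := ((A \ B) ∪ (B \ A)).Finite

/-- `A ⊆* B` : `A \ B` is finite. -/
def SubStar (A B : Set ℕ) : Prop := (A \ B).Finite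

/-- A bowtie of functions: a sequence `⟨f_α : α < ω₁⟩` where each `f_α` is a
fixed-point-free permutation of a set `D_α ⊆ ℕ`, satisfying conditions
(i), (ii), (iii) of the definition.  (The functions are represented as total
functions on `ℕ`; only their behavior on `D_α` matters.) -/
structure BowtieFn where
  /-- the domains `D_α` -/
  D : Ordinal → Set ℕ
  /-- the functions `f_α` (total functions; only values on `D α` matter) -/
  f : Ordinal → ℕ → ℕ
  /-- each `f_α` is a permutation of `D_α` -/
  bijOn : ∀ α < omega1, Set.BijOn (f α) (D α) (D α)
  /-- each `f_α` is fixed-point-free on `D_α` -/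
  fixedPointFree : ∀ α < omega1, ∀ x ∈ D α, f α x ≠ x
  /-- (i) `D_α ⊆* D_β` for `α < β < ω₁` -/
  sub : ∀ α β, α < β → β < omega1 → SubStar (D α) (D β)
  /-- (i) `D_β \ D_α` is infinite for `α < β < ω₁` -/
  diff_infinite : ∀ α β, α < β → β < omega1 → (D β \ D α).Infinite
  /-- (ii) `f_α =* f_β ↾ D_α` for `α ≤ β < ω₁` -/
  coherent : ∀ α β, α ≤ β → β < omega1 → {x ∈ D α | f α x ≠ f β x}.Finite
  /-- (iii) every `A ⊆ ℕ` has a witness `δ_A < ω₁` -/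
  guess : ∀ A : Set ℕ, ∃ δ, δ < omega1 ∧ ∀ α, δ ≤ α → α < omega1 →
      EqStar (f α '' ((D α \ D δ) ∩ A)) ((D α \ D δ) ∩ A) ∧
      EqStar (f α '' ((D α \ D δ) \ A)) ((D α \ D δ) \ A)

/-- A bowtie of involutions: a bowtie of functions in which every `f_α` is an
involution of its domain `D_α`. -/
structure BowtieInv extends BowtieFn where
  /-- each `f_α` is an involution on `D_α` -/
  invol : ∀ α < omega1, ∀ x ∈ D α, f α (f α x) = x

/-- An automorphism of the Boolean algebra `P(ω)/Fin`, represented by a lifting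
`Φ : Set ℕ → Set ℕ` acting on representatives: `Φ` is well defined, injective
and surjective modulo finite sets, and preserves the Boolean operations modulo
finite sets. -/
structure PωFinAuto where
  /-- the action on representatives -/
  Φ : Set ℕ → Set ℕ
  /-- well-definedness on `=*`-classes -/
  congr : ∀ A B : Set ℕ, EqStar A B → EqStar (Φ A) (Φ B)
  /-- injectivity on `=*`-classes -/
  inj : ∀ A B : Set ℕ, EqStar (Φ A) (Φ B) → EqStar A B
  /-- surjectivity on `=*`-classes -/
  surj : ∀ B : Set ℕ, ∃ A : Set ℕ, EqStar (Φ A) B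
  /-- preservation of unions -/
  map_union : ∀ A B : Set ℕ, EqStar (Φ (A ∪ B)) (Φ A ∪ Φ B)
  /-- preservation of complements -/
  map_compl : ∀ A : Set ℕ, EqStar (Φ Aᶜ) (Φ A)ᶜ

/-- A map on representatives induces a *trivial* automorphism of `P(ω)/Fin` if
there is an almost permutation `h` of `ℕ` (an injection on a cofinite set `dom`
whose image is cofinite) with `Φ A =* h[A ∩ dom]` for all `A`. -/
def IsTrivial (Φ : Set ℕ → Set ℕ) : Prop :=
  ∃ (h : ℕ → ℕ) (dom : Set ℕ), (domᶜ : Set ℕ).Finite ∧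
    ((h '' dom)ᶜ : Set ℕ).Finite ∧ Set.InjOn h dom ∧
    ∀ A : Set ℕ, EqStar (Φ A) (h '' (A ∩ dom))

/-!
The automorphism is `Φ(A) = σ_δ[A]`, where `δ = δ_A` is the index guessed for `A` by (iii) and
`σ_α` is `f_α` extended by the identity off `D_α`. Coherence (ii) together with (iii) shows that
`Φ(A) =* σ_α[A]` for every `α ≥ δ_A`, so any finitely many sets are acted on, modulo finite sets, by
one single involution `σ_α` of `ℕ`; this makes `Φ` an involutive automorphism of `P(ω)/Fin`.

If `Φ` were induced by an almost permutation `h`, split the points moved by `h` into three sets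
`A_i` with `h[A_i] ∩ A_i = ∅` and take `γ` above all `δ_{A_i}`. On `D_{γ+1} \ D_γ` each `A_i` is
almost preserved by `f_{γ+1}`, hence by `Φ`, hence by `h`, so each `A_i` meets it in a finite set.
The same argument with the roles of `h` and `f_α` exchanged shows that `h` has only finitely many
fixed points in each `D_α`, so the infinite set `D_{γ+1} \ D_γ` would be finite.
-/

open Filter

section Cofinite

variable {α β : Type*} {s t : Set α}

theorem eventuallyLE_cofinite_iff : s ≤ᶠ[cofinite] t ↔ (s \ t).Finite := by
  simp only [EventuallyLE, eventually_cofinite, le_Prop_eq, Classical.not_imp]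
  rfl

theorem eventuallyEq_cofinite_iff : s =ᶠ[cofinite] t ↔ (s \ t).Finite ∧ (t \ s).Finite :=
  eventuallyLE_antisymm_iff.trans (and_congr eventuallyLE_cofinite_iff eventuallyLE_cofinite_iff)

theorem finite_of_eventuallyLE_cofinite_of_disjoint (hst : s ≤ᶠ[cofinite] t) (hd : Disjoint s t) :
    s.Finite := by
  rwa [eventuallyLE_cofinite_iff, hd.sdiff_eq_left] at hst

theorem Filter.EventuallyEq.image_cofinite (h : s =ᶠ[cofinite] t) (f : α → β) :
    f '' s =ᶠ[cofinite] f '' t := by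
  have key : ∀ {u v : Set α}, (u \ v).Finite → (f '' u \ f '' v).Finite := fun huv =>
    (huv.image f).subset <| by
      rintro _ ⟨⟨x, hx, rfl⟩, hfx⟩
      exact ⟨x, ⟨hx, fun hxv => hfx ⟨x, hxv, rfl⟩⟩, rfl⟩
  rw [eventuallyEq_cofinite_iff] at h ⊢
  exact ⟨key h.1, key h.2⟩

theorem image_eventuallyEq_cofinite_of_finite_ne {f g : α → β} (h : {x ∈ s | f x ≠ g x}.Finite) :
    f '' s =ᶠ[cofinite] g '' s := by
  have key : ∀ {f g : α → β}, {x ∈ s | f x ≠ g x}.Finite → (f '' s \ g '' s).Finite :=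
    fun hfg => (hfg.image _).subset <| by
      rintro _ ⟨⟨x, hx, rfl⟩, hgx⟩
      exact ⟨x, ⟨hx, fun he => hgx ⟨x, hx, he.symm⟩⟩, rfl⟩
  refine eventuallyEq_cofinite_iff.2 ⟨key h, key ?_⟩
  simpa only [ne_comm] using h

end Cofinite

theorem eqStar_iff_eventuallyEq {A B : Set ℕ} : EqStar A B ↔ A =ᶠ[cofinite] B := by
  rw [EqStar, finite_union, eventuallyEq_cofinite_iff]

theorem isSuccLimit_omega1 : Order.IsSuccLimit omega1 :=
  Cardinal.isSuccLimit_ord (Cardinal.aleph0_le_aleph 1)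

section Coloring

theorem exists_fin_three_ne_ne (a b : Fin 3) : ∃ c, c ≠ a ∧ c ≠ b := by
  revert a b
  decide

noncomputable def otherColor (a b : Fin 3) : Fin 3 := (exists_fin_three_ne_ne a b).choose

theorem otherColor_ne_left (a b : Fin 3) : otherColor a b ≠ a :=
  (exists_fin_three_ne_ne a b).choose_spec.1

theorem otherColor_ne_right (a b : Fin 3) : otherColor a b ≠ b :=
  (exists_fin_three_ne_ne a b).choose_spec.2

open Classical in
/-- Greedy colouring of the graph with edges `x — f x` (`x ∈ S`): the colour of `n` avoids those of
its neighbours below `n`, of which there are at most two when `f` is injective on `S`. -/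
noncomputable def greedyColoring (f : ℕ → ℕ) (S : Set ℕ) : ℕ → Fin 3
  | n => otherColor
    (if h : ∃ m < n, m ∈ S ∧ f m = n then greedyColoring f S h.choose else 0)
    (if _ : f n < n then greedyColoring f S (f n) else 0)
  termination_by n => n
  decreasing_by all_goals first | exact h.choose_spec.1 | assumption

theorem greedyColoring_apply_ne {f : ℕ → ℕ} {S : Set ℕ} (hf : InjOn f S) {x : ℕ} (hx : x ∈ S)
    (hfx : f x ≠ x) : greedyColoring f S (f x) ≠ greedyColoring f S x := by
  rcases hfx.lt_or_gt with hlt | hgt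
  · conv_rhs => rw [greedyColoring]
    rw [dif_pos hlt]
    exact (otherColor_ne_right _ _).symm
  · have hex : ∃ m < f x, m ∈ S ∧ f m = f x := ⟨x, hgt, hx, rfl⟩
    conv_lhs => rw [greedyColoring]
    rw [dif_pos hex, hf hex.choose_spec.2.1 hx hex.choose_spec.2.2]
    exact otherColor_ne_left _ _

theorem exists_iUnion_eq_and_disjoint_image {f : ℕ → ℕ} {S : Set ℕ} (hf : InjOn f S)
    (hfix : ∀ x ∈ S, f x ≠ x) :
    ∃ P : Fin 3 → Set ℕ, ⋃ i, P i = S ∧ ∀ i, Disjoint (f '' P i) (P i) := by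
  refine ⟨fun i => S ∩ greedyColoring f S ⁻¹' {i}, by ext; simp, fun i => ?_⟩
  rw [disjoint_left]
  rintro _ ⟨x, ⟨hxS, hxi⟩, rfl⟩ ⟨-, hfxi⟩
  exact greedyColoring_apply_ne hf hxS (hfix x hxS) (hfxi.trans hxi.symm)

end Coloring

namespace BowtieInv

variable (T : BowtieInv) {α β γ : Ordinal} {A B X : Set ℕ}

open Classical in
noncomputable def σ (α : Ordinal) : ℕ → ℕ := (T.D α).piecewise (T.f α) id

theorem σ_eqOn : EqOn (T.σ α) (T.f α) (T.D α) := by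
  classical exact piecewise_eqOn _ _ _

theorem σ_eqOn_compl : EqOn (T.σ α) id (T.D α)ᶜ := by
  classical exact piecewise_eqOn_compl _ _ _

theorem σ_involutive (hα : α < omega1) : Function.Involutive (T.σ α) := by
  intro x
  by_cases hx : x ∈ T.D α
  · rw [T.σ_eqOn hx, T.σ_eqOn ((T.bijOn α hα).mapsTo hx), T.invol α hα x hx]
  · rw [T.σ_eqOn_compl hx, id, T.σ_eqOn_compl hx, id]

theorem finite_D_diff (hαβ : α ≤ β) (hβ : β < omega1) : (T.D α \ T.D β).Finite := by
  rcases hαβ.lt_or_eq with h | rfl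
  · exact T.sub α β h hβ
  · simp

theorem finite_setOf_σ_ne (hαβ : α ≤ β) (hβ : β < omega1) :
    {x | x ∉ T.D β \ T.D α ∧ T.σ α x ≠ T.σ β x}.Finite := by
  refine ((T.coherent α β hαβ hβ).union (T.finite_D_diff hαβ hβ)).subset ?_
  rintro x ⟨hx, hne⟩
  by_cases hxα : x ∈ T.D α
  · by_cases hxβ : x ∈ T.D β
    · rw [T.σ_eqOn hxα, T.σ_eqOn hxβ] at hne
      exact Or.inl ⟨hxα, hne⟩
    · exact Or.inr ⟨hxα, hxβ⟩
  · have hxβ : x ∉ T.D β := fun hxβ => hx ⟨hxβ, hxα⟩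
    exact absurd (by rw [T.σ_eqOn_compl hxα, T.σ_eqOn_compl hxβ]) hne

noncomputable def δ (A : Set ℕ) : Ordinal := (T.guess A).choose

theorem δ_lt_omega1 (A : Set ℕ) : T.δ A < omega1 := (T.guess A).choose_spec.1

theorem exists_lt_omega1_forall_δ_le {ι : Type*} [Fintype ι] (A : ι → Set ℕ) :
    ∃ γ < omega1, ∀ i, T.δ (A i) ≤ γ :=
  ⟨Finset.univ.sup fun i => T.δ (A i),
    (Finset.sup_lt_iff isSuccLimit_omega1.bot_lt).2 fun i _ => T.δ_lt_omega1 (A i),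
    fun i => Finset.le_sup (f := fun i => T.δ (A i)) (Finset.mem_univ i)⟩

theorem σ_image_diff_inter_eventuallyEq (hδα : T.δ A ≤ α) (hα : α < omega1) :
    T.σ α '' ((T.D α \ T.D (T.δ A)) ∩ A) =ᶠ[cofinite] ((T.D α \ T.D (T.δ A)) ∩ A : Set ℕ) := by
  have hsub : (T.D α \ T.D (T.δ A)) ∩ A ⊆ T.D α := fun x hx => hx.1.1
  rw [(T.σ_eqOn.mono hsub).image_eq, ← eqStar_iff_eventuallyEq]
  exact ((T.guess A).choose_spec.2 α hδα hα).1

noncomputable def Φ (A : Set ℕ) : Set ℕ := T.σ (T.δ A) '' A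

theorem Φ_eventuallyEq (hδα : T.δ A ≤ α) (hα : α < omega1) :
    T.Φ A =ᶠ[cofinite] T.σ α '' A := by
  set M := T.D α \ T.D (T.δ A)
  have hA : A \ M ∪ M ∩ A = A := by rw [inter_comm, sdiff_union_inter]
  have hM : T.σ (T.δ A) '' (M ∩ A) = M ∩ A :=
    EqOn.image_eq_self fun x hx => T.σ_eqOn_compl hx.1.2
  have hrest : T.σ (T.δ A) '' (A \ M) =ᶠ[cofinite] T.σ α '' (A \ M) :=
    image_eventuallyEq_cofinite_of_finite_ne <|
      (T.finite_setOf_σ_ne hδα hα).subset fun x hx => ⟨hx.1.2, hx.2⟩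
  have hnew : T.σ (T.δ A) '' (M ∩ A) =ᶠ[cofinite] T.σ α '' (M ∩ A) := by
    rw [hM]
    exact (T.σ_image_diff_inter_eventuallyEq hδα hα).symm
  have hsplit := hrest.union hnew
  rwa [← image_union, ← image_union, hA] at hsplit

theorem Φ_eventuallyEq_image_of_subset (hX : X ⊆ T.D α) (hα : α < omega1) :
    T.Φ X =ᶠ[cofinite] T.f α '' X := by
  have hβ : max (T.δ X) α < omega1 := max_lt (T.δ_lt_omega1 X) hα
  have hagree : T.σ (max (T.δ X) α) '' X =ᶠ[cofinite] T.σ α '' X :=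
    image_eventuallyEq_cofinite_of_finite_ne <|
      (T.finite_setOf_σ_ne (le_max_right _ _) hβ).subset fun x hx =>
        ⟨fun h => h.2 (hX hx.1), Ne.symm hx.2⟩
  rw [(T.σ_eqOn.mono hX).image_eq] at hagree
  exact (T.Φ_eventuallyEq (le_max_left _ _) hβ).trans hagree

theorem Φ_congr (h : A =ᶠ[cofinite] B) : T.Φ A =ᶠ[cofinite] T.Φ B := by
  obtain ⟨α, hα, hδ⟩ := T.exists_lt_omega1_forall_δ_le ![A, B]
  have hA : T.Φ A =ᶠ[cofinite] T.σ α '' A := T.Φ_eventuallyEq (hδ 0) hα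
  have hB : T.Φ B =ᶠ[cofinite] T.σ α '' B := T.Φ_eventuallyEq (hδ 1) hα
  exact hA.trans <| (h.image_cofinite _).trans hB.symm

theorem Φ_union (A B : Set ℕ) : T.Φ (A ∪ B) =ᶠ[cofinite] (T.Φ A ∪ T.Φ B : Set ℕ) := by
  obtain ⟨α, hα, hδ⟩ := T.exists_lt_omega1_forall_δ_le ![A ∪ B, A, B]
  have hAB : T.Φ (A ∪ B) =ᶠ[cofinite] (T.σ α '' A ∪ T.σ α '' B : Set ℕ) :=
    image_union (T.σ α) A B ▸ T.Φ_eventuallyEq (hδ 0) hα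
  have hA : T.Φ A =ᶠ[cofinite] T.σ α '' A := T.Φ_eventuallyEq (hδ 1) hα
  have hB : T.Φ B =ᶠ[cofinite] T.σ α '' B := T.Φ_eventuallyEq (hδ 2) hα
  exact hAB.trans (hA.union hB).symm

theorem Φ_compl (A : Set ℕ) : T.Φ Aᶜ =ᶠ[cofinite] (T.Φ A)ᶜ := by
  obtain ⟨α, hα, hδ⟩ := T.exists_lt_omega1_forall_δ_le ![Aᶜ, A]
  have hAc : T.Φ Aᶜ =ᶠ[cofinite] (T.σ α '' A)ᶜ :=
    image_compl_eq (T.σ_involutive hα).bijective ▸ T.Φ_eventuallyEq (hδ 0) hα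
  have hA : T.Φ A =ᶠ[cofinite] T.σ α '' A := T.Φ_eventuallyEq (hδ 1) hα
  exact hAc.trans hA.symm.compl

theorem Φ_Φ (A : Set ℕ) : T.Φ (T.Φ A) =ᶠ[cofinite] A := by
  obtain ⟨α, hα, hδ⟩ := T.exists_lt_omega1_forall_δ_le ![T.Φ A, A]
  have hΦA : T.Φ (T.Φ A) =ᶠ[cofinite] T.σ α '' T.Φ A := T.Φ_eventuallyEq (hδ 0) hα
  have hA : T.Φ A =ᶠ[cofinite] T.σ α '' A := T.Φ_eventuallyEq (hδ 1) hα
  have hσσ : T.σ α '' (T.σ α '' A) = A := by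
    simp only [image_image, T.σ_involutive hα _, image_id']
  have hσA := hA.image_cofinite (T.σ α)
  rw [hσσ] at hσA
  exact hΦA.trans hσA

noncomputable def toPωFinAuto : PωFinAuto where
  Φ := T.Φ
  congr _ _ h := eqStar_iff_eventuallyEq.2 (T.Φ_congr (eqStar_iff_eventuallyEq.1 h))
  inj A B h := eqStar_iff_eventuallyEq.2 <|
    (T.Φ_Φ A).symm.trans ((T.Φ_congr (eqStar_iff_eventuallyEq.1 h)).trans (T.Φ_Φ B))
  surj B := ⟨T.Φ B, eqStar_iff_eventuallyEq.2 (T.Φ_Φ B)⟩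
  map_union A B := eqStar_iff_eventuallyEq.2 (T.Φ_union A B)
  map_compl A := eqStar_iff_eventuallyEq.2 (T.Φ_compl A)

variable {h : ℕ → ℕ}

theorem finite_setOf_mem_D_apply_eq (hΦ : ∀ A, T.Φ A =ᶠ[cofinite] h '' A) (hα : α < omega1) :
    {x ∈ T.D α | h x = x}.Finite := by
  obtain ⟨P, hPF, hP⟩ := exists_iUnion_eq_and_disjoint_image (S := {x ∈ T.D α | h x = x})
    ((T.bijOn α hα).injOn.mono fun x hx => hx.1) fun x hx => T.fixedPointFree α hα x hx.1
  rw [← hPF]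
  refine finite_iUnion fun i => ?_
  have hPi : P i ⊆ {x ∈ T.D α | h x = x} := hPF ▸ subset_iUnion P i
  have hΦP := hΦ (P i)
  rw [EqOn.image_eq_self fun x hx => (hPi hx).2] at hΦP
  exact finite_of_eventuallyLE_cofinite_of_disjoint
    (hΦP.symm.trans (T.Φ_eventuallyEq_image_of_subset (fun x hx => (hPi hx).1) hα)).le
    (hP i).symm

theorem finite_D_diff_inter_of_disjoint (hΦ : ∀ A, T.Φ A =ᶠ[cofinite] h '' A)
    (hA : Disjoint (h '' A) A) (hδγ : T.δ A ≤ γ) (hγα : γ ≤ α) (hα : α < omega1) :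
    ((T.D α \ T.D γ) ∩ A).Finite := by
  set N := (T.D α \ T.D (T.δ A)) ∩ A
  have hN : N ≤ᶠ[cofinite] h '' A :=
    (T.σ_image_diff_inter_eventuallyEq (hδγ.trans hγα) hα).symm.trans_le <|
      (LE.le.eventuallyLE (image_mono inter_subset_right)).trans_eq <|
        (T.Φ_eventuallyEq (hδγ.trans hγα) hα).symm.trans (hΦ A)
  have hNfin : N.Finite :=
    finite_of_eventuallyLE_cofinite_of_disjoint hN (hA.symm.mono_left inter_subset_right)
  refine (hNfin.union (T.finite_D_diff hδγ (hγα.trans_lt hα))).subset ?_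
  rintro x ⟨⟨hxα, hxγ⟩, hxA⟩
  by_cases hxδ : x ∈ T.D (T.δ A)
  · exact Or.inr ⟨hxδ, hxγ⟩
  · exact Or.inl ⟨⟨hxα, hxδ⟩, hxA⟩

theorem not_isTrivial_Φ : ¬ IsTrivial T.Φ := by
  rintro ⟨h, dom, hdom, -, hinj, htriv⟩
  have hΦ : ∀ A, T.Φ A =ᶠ[cofinite] h '' A := fun A =>
    (eqStar_iff_eventuallyEq.1 (htriv A)).trans <| EventuallyEq.image_cofinite
      (inter_eventuallyEq_left.2 <| hdom.eventually_cofinite_notMem.mono fun _ hx _ => not_not.1 hx) h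
  obtain ⟨P, hPS, hP⟩ := exists_iUnion_eq_and_disjoint_image (S := {x ∈ dom | h x ≠ x})
    (hinj.mono fun x hx => hx.1) fun x hx => hx.2
  obtain ⟨γ, hγ, hδ⟩ := T.exists_lt_omega1_forall_δ_le P
  have hsucc : Order.succ γ < omega1 := isSuccLimit_omega1.succ_lt hγ
  refine T.diff_infinite γ _ (Order.lt_succ γ) hsucc <|
    ((hdom.union (T.finite_setOf_mem_D_apply_eq hΦ hsucc)).union <| finite_iUnion fun i =>
      T.finite_D_diff_inter_of_disjoint hΦ (hP i) (hδ i) (Order.le_succ γ) hsucc).subset ?_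
  intro x hx
  by_cases hxdom : x ∈ dom
  · by_cases hfix : h x = x
    · exact Or.inl (Or.inr ⟨hx.1, hfix⟩)
    · obtain ⟨i, hi⟩ := mem_iUnion.1 (hPS ▸ ⟨hxdom, hfix⟩ : x ∈ ⋃ i, P i)
      exact Or.inr (mem_iUnion.2 ⟨i, hx, hi⟩)
  · exact Or.inl (Or.inl hxdom)

end BowtieInv

/-- If there exists a bowtie of involutions, then there exists a
nontrivial automorphism `Φ` of `P(ω)/Fin` with `Φ ∘ Φ = id`. -/
theorem bowtie_of_involutions_implies_nontrivial_involution
    (h : Nonempty BowtieInv) :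
    ∃ F : PωFinAuto, ¬ IsTrivial F.Φ ∧ ∀ A : Set ℕ, EqStar (F.Φ (F.Φ A)) A := by
  obtain ⟨T⟩ := h
  exact ⟨T.toPωFinAuto, T.not_isTrivial_Φ, fun A => eqStar_iff_eventuallyEq.2 (T.Φ_Φ A)⟩
end

section
/- Let ⟨f_α : α < ω₁⟩ be a bowtie of functions with domains D_α, and let F be the associated map on subsets of ℕ. Then for all A, B ⊆ ℕ: F(A ∪ B) =* F(A) ∪ F(B) and F(A ∩ B) =* F(A) ∩ F(B); moreover, if A =* B then F(A) =* F(B). -/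
open Set

/-- `δ` witnesses condition (iii) of the bowtie definition for the set `A`. -/
def BowtieFn.IsWitness (B : BowtieFn) (A : Set ℕ) (δ : Ordinal) : Prop :=
  δ < omega1 ∧ ∀ α, δ ≤ α → α < omega1 →
    EqStar (B.f α '' ((B.D α \ B.D δ) ∩ A)) ((B.D α \ B.D δ) ∩ A) ∧
    EqStar (B.f α '' ((B.D α \ B.D δ) \ A)) ((B.D α \ B.D δ) \ A)

/-- `δ_A` : the least ordinal witnessing condition (iii) for `A`. -/
noncomputable def BowtieFn.delta (B : BowtieFn) (A : Set ℕ) : Ordinal :=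
  sInf {δ | B.IsWitness A δ}

/-- The map `F` associated to a bowtie of functions:
`F(A) = f_{δ_A}[A ∩ D_{δ_A}] ∪ (A \ D_{δ_A})`. -/
noncomputable def BowtieFn.F (B : BowtieFn) (A : Set ℕ) : Set ℕ :=
  B.f (B.delta A) '' (A ∩ B.D (B.delta A)) ∪ (A \ B.D (B.delta A))

section EqStarLemmas

variable {A A' C S T : Set ℕ}

lemma eqStar_iff : EqStar A A' ↔ (A \ A').Finite ∧ (A' \ A).Finite := by
  constructor
  · intro h
    exact ⟨h.subset subset_union_left, h.subset subset_union_right⟩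
  · rintro ⟨h1, h2⟩
    exact h1.union h2

lemma eqStar_refl (A : Set ℕ) : EqStar A A := by
  simp [EqStar]

lemma EqStar.symm' (h : EqStar A A') : EqStar A' A := by
  rw [eqStar_iff] at h ⊢
  exact ⟨h.2, h.1⟩

lemma EqStar.trans' (h : EqStar A A') (h' : EqStar A' C) : EqStar A C := by
  rw [eqStar_iff] at h h' ⊢
  constructor
  · refine (h.1.union h'.1).subset ?_
    intro x hx
    by_cases hx' : x ∈ A'
    · exact Or.inr ⟨hx', hx.2⟩
    · exact Or.inl ⟨hx.1, hx'⟩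
  · refine (h'.2.union h.2).subset ?_
    intro x hx
    by_cases hx' : x ∈ A'
    · exact Or.inr ⟨hx', hx.2⟩
    · exact Or.inl ⟨hx.1, hx'⟩

lemma EqStar.union' {D : Set ℕ} (h : EqStar A A') (h' : EqStar C D) :
    EqStar (A ∪ C) (A' ∪ D) := by
  rw [eqStar_iff] at h h' ⊢
  constructor
  · refine (h.1.union h'.1).subset ?_
    rintro x ⟨hx1 | hx1, hx2⟩
    · exact Or.inl ⟨hx1, fun hh => hx2 (Or.inl hh)⟩
    · exact Or.inr ⟨hx1, fun hh => hx2 (Or.inr hh)⟩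
  · refine (h.2.union h'.2).subset ?_
    rintro x ⟨hx1 | hx1, hx2⟩
    · exact Or.inl ⟨hx1, fun hh => hx2 (Or.inl hh)⟩
    · exact Or.inr ⟨hx1, fun hh => hx2 (Or.inr hh)⟩

lemma EqStar.inter' {D : Set ℕ} (h : EqStar A A') (h' : EqStar C D) :
    EqStar (A ∩ C) (A' ∩ D) := by
  rw [eqStar_iff] at h h' ⊢
  constructor
  · refine (h.1.union h'.1).subset ?_
    rintro x ⟨⟨hx1, hx2⟩, hx3⟩
    by_cases hA' : x ∈ A'
    · exact Or.inr ⟨hx2, fun hh => hx3 ⟨hA', hh⟩⟩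
    · exact Or.inl ⟨hx1, hA'⟩
  · refine (h.2.union h'.2).subset ?_
    rintro x ⟨⟨hx1, hx2⟩, hx3⟩
    by_cases hA : x ∈ A
    · exact Or.inr ⟨hx2, fun hh => hx3 ⟨hA, hh⟩⟩
    · exact Or.inl ⟨hx1, hA⟩

lemma EqStar.diff' {D : Set ℕ} (h : EqStar A A') : EqStar (A \ D) (A' \ D) := by
  rw [eqStar_iff] at h ⊢
  constructor
  · exact h.1.subset fun x hx => ⟨hx.1.1, fun hh => hx.2 ⟨hh, hx.1.2⟩⟩
  · exact h.2.subset fun x hx => ⟨hx.1.1, fun hh => hx.2 ⟨hh, hx.1.2⟩⟩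

lemma EqStar.image' (f : ℕ → ℕ) (h : EqStar S T) : EqStar (f '' S) (f '' T) := by
  rw [eqStar_iff] at h ⊢
  constructor
  · refine (h.1.image f).subset ?_
    rintro y ⟨⟨x, hxS, rfl⟩, hnT⟩
    exact ⟨x, ⟨hxS, fun hxT => hnT ⟨x, hxT, rfl⟩⟩, rfl⟩
  · refine (h.2.image f).subset ?_
    rintro y ⟨⟨x, hxT, rfl⟩, hnS⟩
    exact ⟨x, ⟨hxT, fun hxS => hnS ⟨x, hxS, rfl⟩⟩, rfl⟩

/-- If `f` and `g` agree on `S` off a finite set, then `f '' S =* g '' S`. -/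
lemma eqStar_image_of_ae (f g : ℕ → ℕ) (S : Set ℕ)
    (h : {x ∈ S | f x ≠ g x}.Finite) : EqStar (f '' S) (g '' S) := by
  rw [eqStar_iff]
  constructor
  · refine (h.image f).subset ?_
    rintro y ⟨⟨x, hx, rfl⟩, hng⟩
    refine ⟨x, ⟨hx, fun heq => hng ⟨x, hx, heq.symm⟩⟩, rfl⟩
  · refine (h.image g).subset ?_
    rintro y ⟨⟨x, hx, rfl⟩, hnf⟩
    refine ⟨x, ⟨hx, fun heq => hnf ⟨x, hx, heq⟩⟩, rfl⟩

end EqStarLemmas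

namespace BowtieFn

variable (B : BowtieFn)

lemma delta_isWitness (A : Set ℕ) : B.IsWitness A (B.delta A) := by
  have hne : {δ | B.IsWitness A δ}.Nonempty := by
    obtain ⟨δ, h1, h2⟩ := B.guess A
    exact ⟨δ, h1, h2⟩
  exact csInf_mem hne

lemma delta_lt (A : Set ℕ) : B.delta A < omega1 := (B.delta_isWitness A).1

/-- The key lemma: `F A` agrees mod finite with the "level-`δ'` version" for any
`δ'` with `δ_A ≤ δ' < ω₁`. -/
lemma F_eqStar_level (A : Set ℕ) {δ' : Ordinal} (h1 : B.delta A ≤ δ') (h2 : δ' < omega1) :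
    EqStar (B.F A) (B.f δ' '' (A ∩ B.D δ') ∪ (A \ B.D δ')) := by
  rcases eq_or_lt_of_le h1 with heq | hlt
  · rw [← heq]
    exact eqStar_refl _
  obtain ⟨hδlt, hwit⟩ := B.delta_isWitness A
  set δ := B.delta A with hδ
  have hcoh : {x ∈ B.D δ | B.f δ x ≠ B.f δ' x}.Finite := B.coherent δ δ' (le_of_lt hlt) h2
  have hsub : (B.D δ \ B.D δ').Finite := B.sub δ δ' hlt h2
  obtain ⟨h3, -⟩ := hwit δ' (le_of_lt hlt) h2
  -- h3 : EqStar (f δ' '' ((D δ' \ D δ) ∩ A)) ((D δ' \ D δ) ∩ A)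
  have hdecomp : A ∩ B.D δ' = (A ∩ B.D δ' ∩ B.D δ) ∪ ((B.D δ' \ B.D δ) ∩ A) := by
    ext x
    simp only [mem_inter_iff, mem_union, mem_diff]
    tauto
  have e1 : EqStar (B.f δ' '' (A ∩ B.D δ' ∩ B.D δ)) (B.f δ '' (A ∩ B.D δ)) := by
    have step1 : EqStar (B.f δ' '' (A ∩ B.D δ' ∩ B.D δ)) (B.f δ '' (A ∩ B.D δ' ∩ B.D δ)) := by
      apply eqStar_image_of_ae
      refine hcoh.subset ?_
      rintro x ⟨hx, hne⟩
      exact ⟨hx.2, fun hh => hne hh.symm⟩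
    have step2 : EqStar (A ∩ B.D δ' ∩ B.D δ) (A ∩ B.D δ) := by
      rw [eqStar_iff]
      constructor
      · exact Set.finite_empty.subset (by rintro x ⟨⟨⟨h1, h2⟩, h3⟩, h4⟩; exact h4 ⟨h1, h3⟩)
      · exact hsub.subset (by rintro x ⟨⟨h1, h2⟩, h3⟩; exact ⟨h2, fun hh => h3 ⟨⟨h1, hh⟩, h2⟩⟩)
    exact step1.trans' (EqStar.image' _ step2)
  have e3 : EqStar (((B.D δ' \ B.D δ) ∩ A) ∪ (A \ B.D δ')) (A \ B.D δ) := by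
    rw [eqStar_iff]
    constructor
    · refine hsub.subset ?_
      rintro x ⟨hx1 | hx1, hx2⟩
      · exact absurd ⟨hx1.2, hx1.1.2⟩ hx2
      · by_cases hD : x ∈ B.D δ
        · exact ⟨hD, fun hh => hx1.2 hh⟩
        · exact absurd ⟨hx1.1, hD⟩ hx2
    · refine Set.finite_empty.subset ?_
      rintro x ⟨⟨hxA, hxD⟩, hxn⟩
      by_cases hD' : x ∈ B.D δ'
      · exact hxn (Or.inl ⟨⟨hD', hxD⟩, hxA⟩)
      · exact hxn (Or.inr ⟨hxA, hD'⟩)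
  have hrw : B.f δ' '' (A ∩ B.D δ') ∪ (A \ B.D δ') =
      B.f δ' '' (A ∩ B.D δ' ∩ B.D δ) ∪
        (B.f δ' '' ((B.D δ' \ B.D δ) ∩ A) ∪ (A \ B.D δ')) := by
    nth_rewrite 1 [hdecomp]
    rw [image_union, union_assoc]
  rw [hrw]
  exact (e1.union' ((h3.union' (eqStar_refl (A \ B.D δ'))).trans' e3)).symm'

end BowtieFn

/-- `F` preserves unions and intersections modulo finite sets and
is well defined on `=*`-classes. -/
theorem bowtie_F_hom (B : BowtieFn) :
    (∀ A A' : Set ℕ, EqStar (B.F (A ∪ A')) (B.F A ∪ B.F A')) ∧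
    (∀ A A' : Set ℕ, EqStar (B.F (A ∩ A')) (B.F A ∩ B.F A')) ∧
    (∀ A A' : Set ℕ, EqStar A A' → EqStar (B.F A) (B.F A')) := by
  refine ⟨?_, ?_, ?_⟩
  · -- unions
    intro A A'
    set δ := max (max (B.delta A) (B.delta A')) (B.delta (A ∪ A')) with hδdef
    have hδlt : δ < omega1 :=
      max_lt (max_lt (B.delta_lt A) (B.delta_lt A')) (B.delta_lt (A ∪ A'))
    have hU := B.F_eqStar_level (A ∪ A') (le_max_right _ _) hδlt
    have hA := B.F_eqStar_level A ((le_max_left _ _).trans (le_max_left _ _)) hδlt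
    have hA' := B.F_eqStar_level A' ((le_max_right _ _).trans (le_max_left _ _)) hδlt
    have hexact : B.f δ '' ((A ∪ A') ∩ B.D δ) ∪ ((A ∪ A') \ B.D δ) =
        (B.f δ '' (A ∩ B.D δ) ∪ (A \ B.D δ)) ∪
          (B.f δ '' (A' ∩ B.D δ) ∪ (A' \ B.D δ)) := by
      rw [union_inter_distrib_right, image_union, union_diff_distrib,
        Set.union_union_union_comm]
    refine hU.trans' ?_
    rw [hexact]
    exact (hA.union' hA').symm'
  · -- intersections
    intro A A'
    set δ := max (max (B.delta A) (B.delta A')) (B.delta (A ∩ A')) with hδdef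
    have hδlt : δ < omega1 :=
      max_lt (max_lt (B.delta_lt A) (B.delta_lt A')) (B.delta_lt (A ∩ A'))
    have hI := B.F_eqStar_level (A ∩ A') (le_max_right _ _) hδlt
    have hA := B.F_eqStar_level A ((le_max_left _ _).trans (le_max_left _ _)) hδlt
    have hA' := B.F_eqStar_level A' ((le_max_right _ _).trans (le_max_left _ _)) hδlt
    have hinj : Set.InjOn (B.f δ) (B.D δ) := (B.bijOn δ hδlt).injOn
    have hmaps : Set.MapsTo (B.f δ) (B.D δ) (B.D δ) := (B.bijOn δ hδlt).mapsTo
    have hsubD : ∀ X : Set ℕ, B.f δ '' (X ∩ B.D δ) ⊆ B.D δ := by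
      rintro X y ⟨x, hx, rfl⟩
      exact hmaps hx.2
    have himg : B.f δ '' ((A ∩ A') ∩ B.D δ) =
        B.f δ '' (A ∩ B.D δ) ∩ B.f δ '' (A' ∩ B.D δ) := by
      rw [show (A ∩ A') ∩ B.D δ = (A ∩ B.D δ) ∩ (A' ∩ B.D δ) by
        ext x; simp only [mem_inter_iff]; tauto]
      exact hinj.image_inter inter_subset_right inter_subset_right
    have hexact : B.f δ '' ((A ∩ A') ∩ B.D δ) ∪ ((A ∩ A') \ B.D δ) =
        (B.f δ '' (A ∩ B.D δ) ∪ (A \ B.D δ)) ∩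
          (B.f δ '' (A' ∩ B.D δ) ∪ (A' \ B.D δ)) := by
      ext x
      simp only [mem_union, mem_inter_iff, mem_diff]
      constructor
      · rintro (h | h)
        · rw [himg] at h
          exact ⟨Or.inl h.1, Or.inl h.2⟩
        · exact ⟨Or.inr ⟨h.1.1, h.2⟩, Or.inr ⟨h.1.2, h.2⟩⟩
      · rintro ⟨h1 | h1, h2 | h2⟩
        · left; rw [himg]; exact ⟨h1, h2⟩
        · exact absurd (hsubD A h1) h2.2
        · exact absurd (hsubD A' h2) h1.2
        · exact Or.inr ⟨⟨h1.1, h2.1⟩, h1.2⟩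
    refine hI.trans' ?_
    rw [hexact]
    exact (hA.inter' hA').symm'
  · -- well-definedness on `=*`-classes
    intro A A' hAA'
    set δ := max (B.delta A) (B.delta A') with hδdef
    have hδlt : δ < omega1 := max_lt (B.delta_lt A) (B.delta_lt A')
    have hA := B.F_eqStar_level A (le_max_left _ _) hδlt
    have hA' := B.F_eqStar_level A' (le_max_right _ _) hδlt
    have hmid : EqStar (B.f δ '' (A ∩ B.D δ) ∪ (A \ B.D δ))
        (B.f δ '' (A' ∩ B.D δ) ∪ (A' \ B.D δ)) :=
      (EqStar.image' _ (hAA'.inter' (eqStar_refl _))).union' (hAA'.diff')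
    exact (hA.trans' hmid).trans' hA'.symm'
end
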